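/- arXiv:0907.3118 — 4 statements merged into one kernel-verified Lean document; each statement's English description precedes it below -/
import Mathlib

section
/- Let α, β, γ ∈ {−2,−1,0,1,2} with −2 ≤ α ≤ 0, −1 ≤ β ≤ 1, 0 ≤ γ ≤ 2, α ≤ 2β ≤ γ + 2 (i.e. arising from a 2-state population protocol), not all zero, and let a = α − 2β + γ, b = 2β − 2γ, c = γ. Then the polynomial P(X) = aX² + bX + c has at most one root in the open interval (0,1). -/
/-- For a 2-state population protocol with increments `α ∈ [-2,0]`, `β ∈ [-1,1]`,
`γ ∈ [0,2]`, `α ≤ 2β ≤ γ + 2`, not all zero, the polynomial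
`P(X) = aX² + bX + c` with `a = α - 2β + γ`, `b = 2β - 2γ`, `c = γ`
has at most one root in `(0,1)`. -/
theorem stmt5 (α β γ : ℤ)
    (hα : -2 ≤ α ∧ α ≤ 0) (hβ : -1 ≤ β ∧ β ≤ 1) (hγ : 0 ≤ γ ∧ γ ≤ 2)
    (hord : α ≤ 2 * β ∧ 2 * β ≤ γ + 2)
    (hnz : ¬(α = 0 ∧ β = 0 ∧ γ = 0))
    (a b c : ℤ) (ha : a = α - 2 * β + γ) (hb : b = 2 * β - 2 * γ) (hc : c = γ) :
    ∀ x ∈ Set.Ioo (0 : ℝ) 1, ∀ y ∈ Set.Ioo (0 : ℝ) 1,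
      (a : ℝ) * x ^ 2 + (b : ℝ) * x + (c : ℝ) = 0 →
      (a : ℝ) * y ^ 2 + (b : ℝ) * y + (c : ℝ) = 0 → x = y := by
  intro x hx y hy hpx hpy
  by_contra hxy
  obtain ⟨hx0, hx1⟩ := hx
  obtain ⟨hy0, hy1⟩ := hy
  have hsub : ((a:ℝ) * (x + y) + b) * (x - y) = 0 := by
    linear_combination hpx - hpy
  have hdiff : (a:ℝ) * (x + y) + (b:ℝ) = 0 := by
    rcases mul_eq_zero.1 hsub with h | h
    · exact h
    · exact absurd (sub_eq_zero.1 h) hxy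
  rcases eq_or_ne (a:ℝ) 0 with haz | haz
  · have hbz : (b:ℝ) = 0 := by
      nlinarith [hdiff]
    have hcz : (c:ℝ) = 0 := by
      nlinarith [hpx]
    have hγz : γ = 0 := by exact_mod_cast hc ▸ (by exact_mod_cast hcz : c = 0)
    have hβz : β = 0 := by
      have : b = 0 := by exact_mod_cast hbz
      omega
    have hαz : α = 0 := by
      have : a = 0 := by exact_mod_cast haz
      omega
    exact hnz ⟨hαz, hβz, hγz⟩
  · have hcv : (c:ℝ) = (a:ℝ) * x * y := by
      linear_combination hpx - x * hdiff
    have hc0 : (0:ℝ) ≤ (c:ℝ) := by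
      have : (0:ℤ) ≤ c := by omega
      exact_mod_cast this
    have hapos : (0:ℝ) < (a:ℝ) := by
      rcases lt_trichotomy ((a:ℝ)) 0 with h | h | h
      · nlinarith [mul_pos hx0 hy0]
      · exact absurd h haz
      · exact h
    have habc : (a:ℝ) + (b:ℝ) + (c:ℝ) ≤ 0 := by
      have : a + b + c ≤ 0 := by omega
      exact_mod_cast this
    nlinarith [mul_pos (mul_pos hapos (sub_pos.2 hx1)) (sub_pos.2 hy1)]
end

section
/- With notation as for a 2-state protocol, if p* ∈ (0,1) is a root of P(X) = aX² + bX + c, then 2·a·p* + b < 0. -/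
/-- For a 2-state population protocol (α ∈ [-2,0], β ∈ [-1,1], γ ∈ [0,2], not all
zero), if `p* ∈ (0,1)` is a root of `P(X) = aX² + bX + c` with `a = α - 2β + γ`,
`b = 2β - 2γ`, `c = γ`, then `2 a p* + b < 0`. -/
theorem stmt6 (α β γ : ℤ)
    (hα : -2 ≤ α ∧ α ≤ 0) (hβ : -1 ≤ β ∧ β ≤ 1) (hγ : 0 ≤ γ ∧ γ ≤ 2)
    (hnz : ¬(α = 0 ∧ β = 0 ∧ γ = 0))
    (a b c : ℤ) (ha : a = α - 2 * β + γ) (hb : b = 2 * β - 2 * γ) (hc : c = γ)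
    (p : ℝ) (hp : p ∈ Set.Ioo (0 : ℝ) 1)
    (hroot : (a : ℝ) * p ^ 2 + (b : ℝ) * p + (c : ℝ) = 0) :
    2 * (a : ℝ) * p + (b : ℝ) < 0 := by
  obtain ⟨hp0, hp1⟩ := hp
  have hcR : (0 : ℝ) ≤ (c : ℝ) := by exact_mod_cast hc ▸ hγ.1
  have habc : (a : ℝ) + b + c ≤ 0 := by
    have : a + b + c = α := by subst ha hb hc; ring
    exact_mod_cast this ▸ hα.2
  rcases lt_trichotomy a 0 with hA | hA | hA
  · -- a < 0 : use c ≥ 0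
    have hAR : (a : ℝ) < 0 := by exact_mod_cast hA
    nlinarith [mul_pos hp0 (sub_pos.mpr hp1), mul_pos hp0 hp0]
  · -- a = 0 : linear case, show b < 0
    have hAR : (a : ℝ) = 0 := by exact_mod_cast hA
    rcases lt_or_ge b 0 with hB | hB
    · have : (b : ℝ) < 0 := by exact_mod_cast hB
      nlinarith
    · exfalso
      have hBR : (0 : ℝ) ≤ (b : ℝ) := by exact_mod_cast hB
      have hb0 : (b : ℝ) = 0 := by nlinarith
      have hc0 : (c : ℝ) = 0 := by nlinarith
      have hb0' : b = 0 := by exact_mod_cast hb0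
      have hc0' : c = 0 := by exact_mod_cast hc0
      exact hnz (by omega)
  · -- a > 0 : use a + b + c ≤ 0
    have hAR : (0 : ℝ) < (a : ℝ) := by exact_mod_cast hA
    nlinarith [mul_pos hp0 (sub_pos.mpr hp1), mul_pos (sub_pos.mpr hp1) (sub_pos.mpr hp1)]
end

section
/- With notation as for a 2-state protocol, if p* ∈ (0,1) is a root of P(X) = aX² + bX + c, then q := (α² − 2β² + γ²)(p*)² + (2β² − 2γ²)p* + γ² > 0. -/
/-- For a 2-state population protocol (α ∈ [-2,0], β ∈ [-1,1], γ ∈ [0,2], not all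
zero), if `p* ∈ (0,1)` is a root of `P(X) = aX² + bX + c` with `a = α - 2β + γ`,
`b = 2β - 2γ`, `c = γ`, then
`q = (α² - 2β² + γ²)(p*)² + (2β² - 2γ²)p* + γ² > 0`. -/
theorem stmt7 (α β γ : ℤ)
    (hα : -2 ≤ α ∧ α ≤ 0) (hβ : -1 ≤ β ∧ β ≤ 1) (hγ : 0 ≤ γ ∧ γ ≤ 2)
    (hnz : ¬(α = 0 ∧ β = 0 ∧ γ = 0))
    (a b c : ℤ) (ha : a = α - 2 * β + γ) (hb : b = 2 * β - 2 * γ) (hc : c = γ)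
    (p : ℝ) (hp : p ∈ Set.Ioo (0 : ℝ) 1)
    (hroot : (a : ℝ) * p ^ 2 + (b : ℝ) * p + (c : ℝ) = 0) :
    0 < ((α : ℝ) ^ 2 - 2 * (β : ℝ) ^ 2 + (γ : ℝ) ^ 2) * p ^ 2
        + (2 * (β : ℝ) ^ 2 - 2 * (γ : ℝ) ^ 2) * p + (γ : ℝ) ^ 2 := by
  obtain ⟨hp0, hp1⟩ := hp
  have hkey : ((α : ℝ) ^ 2 - 2 * (β : ℝ) ^ 2 + (γ : ℝ) ^ 2) * p ^ 2
        + (2 * (β : ℝ) ^ 2 - 2 * (γ : ℝ) ^ 2) * p + (γ : ℝ) ^ 2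
      = ((α : ℝ) * p) ^ 2 + 2 * (β : ℝ) ^ 2 * (p * (1 - p))
        + ((γ : ℝ) * (1 - p)) ^ 2 := by ring
  rw [hkey]
  have h1 : (0 : ℝ) < p * (1 - p) := mul_pos hp0 (by linarith)
  have hcases : α ≠ 0 ∨ β ≠ 0 ∨ γ ≠ 0 := by tauto
  rcases hcases with h | h | h
  · have : ((α : ℝ) * p) ≠ 0 := mul_ne_zero (Int.cast_ne_zero.mpr h) (ne_of_gt hp0)
    have h2 : 0 < ((α : ℝ) * p) ^ 2 := by
      have := pow_pos (abs_pos.mpr this) 2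
      rwa [sq_abs] at this
    nlinarith [sq_nonneg ((γ : ℝ) * (1 - p)), sq_nonneg (β : ℝ)]
  · have hb2 : (0 : ℝ) < (β : ℝ) ^ 2 := by positivity
    nlinarith [sq_nonneg ((α : ℝ) * p), sq_nonneg ((γ : ℝ) * (1 - p))]
  · have : ((γ : ℝ) * (1 - p)) ≠ 0 := mul_ne_zero (Int.cast_ne_zero.mpr h) (by linarith)
    have h2 : 0 < ((γ : ℝ) * (1 - p)) ^ 2 := by positivity
    nlinarith [sq_nonneg ((α : ℝ) * p), sq_nonneg (β : ℝ)]
end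

section
/- For the Markov chain Y(k) = √n (p(k) − √2/2) obtained from the protocol computing √2/2, the conditional drift satisfies E[Y(k+1) − Y(k) | Y(k)] = (√2 − 1)/(√n (n−1)) + Y(k)·(−2√2/(n−1) + 2/(n(n−1))) − Y(k)²·2/(√n (n−1)), and hence n·E[Y(k+1) − Y(k) | Y(k) = y] → −2√2 y as n → ∞, uniformly for |y| ≤ R for every R > 0 (with y ranging over attainable values). -/
lemma stmt19_key (s t p : ℝ) (hn : 2 ≤ s ^ 2) (hs0 : 0 < s) (ht : t ^ 2 = 2) :
    s * ((1 / s ^ 2) * (1 - 2 * p ^ 2 * (s ^ 2 / (s ^ 2 - 1)) + p * (2 / (s ^ 2 - 1))))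
      = (t - 1) / (s * (s ^ 2 - 1))
        + (s * (p - t / 2)) * (-(2 * t) / (s ^ 2 - 1) + 2 / (s ^ 2 * (s ^ 2 - 1)))
        - (s * (p - t / 2)) ^ 2 * (2 / (s * (s ^ 2 - 1))) := by
  have hn1 : s ^ 2 - 1 ≠ 0 := by nlinarith
  have hs0' : s ≠ 0 := ne_of_gt hs0
  field_simp
  ring_nf
  linear_combination (-s^2) * ht

lemma stmt19_key2 (s t p : ℝ) (hn : 2 ≤ s ^ 2) (hs0 : 0 < s) (ht : t ^ 2 = 2) :
    s ^ 2 * (s * ((1 / s ^ 2) * (1 - 2 * p ^ 2 * (s ^ 2 / (s ^ 2 - 1)) + p * (2 / (s ^ 2 - 1)))))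
      - (-(2 * t) * (s * (p - t / 2)))
      = ((t - 1) * s - 2 * t * (s * (p - t / 2)) + 2 * (s * (p - t / 2))
          - 2 * s * (s * (p - t / 2)) ^ 2) / (s ^ 2 - 1) := by
  have hn1 : s ^ 2 - 1 ≠ 0 := by nlinarith
  have hs0' : s ≠ 0 := ne_of_gt hs0
  field_simp
  ring_nf
  linear_combination (-s^2) * ht

set_option maxHeartbeats 1600000 in
/-- For `Y(k) = √n (p(k) - √2/2)`, with
`E[p(k+1)-p(k) | p(k)] = (1/n)(1 - 2p² n/(n-1) + 2p/(n-1))`, the conditional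
drift of `Y` equals
`(√2-1)/(√n(n-1)) + y(-2√2/(n-1) + 2/(n(n-1))) - y²·2/(√n(n-1))`,
and hence `n·E[Y(k+1)-Y(k) | Y(k)=y] → -2√2 y` as `n → ∞`, uniformly for
`|y| ≤ R`, for every `R > 0`, over attainable values `y = √n(i/n - √2/2)`. -/
theorem stmt19 :
    (∀ n i : ℕ, 2 ≤ n → i ≤ n →
      Real.sqrt n * ((1 / (n : ℝ)) *
          (1 - 2 * ((i : ℝ) / n) ^ 2 * ((n : ℝ) / ((n : ℝ) - 1))
            + ((i : ℝ) / n) * (2 / ((n : ℝ) - 1))))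
        = (Real.sqrt 2 - 1) / (Real.sqrt n * ((n : ℝ) - 1))
          + (Real.sqrt n * ((i : ℝ) / n - Real.sqrt 2 / 2)) *
              (-(2 * Real.sqrt 2) / ((n : ℝ) - 1) + 2 / ((n : ℝ) * ((n : ℝ) - 1)))
          - (Real.sqrt n * ((i : ℝ) / n - Real.sqrt 2 / 2)) ^ 2 *
              (2 / (Real.sqrt n * ((n : ℝ) - 1)))) ∧
    (∀ R > (0 : ℝ), ∀ ε > (0 : ℝ), ∃ N : ℕ, ∀ n ≥ N, 2 ≤ n → ∀ i ≤ n,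
      |Real.sqrt n * ((i : ℝ) / n - Real.sqrt 2 / 2)| ≤ R →
      |(n : ℝ) * (Real.sqrt n * ((1 / (n : ℝ)) *
            (1 - 2 * ((i : ℝ) / n) ^ 2 * ((n : ℝ) / ((n : ℝ) - 1))
              + ((i : ℝ) / n) * (2 / ((n : ℝ) - 1)))))
          - (-(2 * Real.sqrt 2) * (Real.sqrt n * ((i : ℝ) / n - Real.sqrt 2 / 2)))|
        < ε) := by
  have ht : Real.sqrt 2 ^ 2 = 2 := Real.sq_sqrt (by norm_num)
  have ht1 : 1 ≤ Real.sqrt 2 := by nlinarith [Real.sqrt_nonneg 2]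
  have ht2 : Real.sqrt 2 ≤ 3 / 2 := by nlinarith [Real.sqrt_nonneg 2]
  constructor
  · intro n i hn hi
    have hs : Real.sqrt n ^ 2 = (n : ℝ) := Real.sq_sqrt (Nat.cast_nonneg n)
    have hnpos : 0 < n := by omega
    have hs0 : (0 : ℝ) < Real.sqrt n := Real.sqrt_pos.mpr (by exact_mod_cast hnpos)
    have hn2 : (2 : ℝ) ≤ Real.sqrt n ^ 2 := by rw [hs]; exact_mod_cast hn
    have := stmt19_key (Real.sqrt n) (Real.sqrt 2) ((i : ℝ) / n) hn2 hs0 ht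
    rw [hs] at this
    exact this
  · intro R hR ε hε
    set C : ℝ := 1 + 5 * R + 2 * R ^ 2 with hC
    have hC0 : 0 < C := by positivity
    obtain ⟨N, hN⟩ := exists_nat_gt ((2 * C / ε) ^ 2)
    refine ⟨N, fun n hnN hn i hi hy => ?_⟩
    set s := Real.sqrt n with hsdef
    set t := Real.sqrt 2 with htdef
    set y := s * ((i : ℝ) / n - t / 2) with hydef
    have hs : s ^ 2 = (n : ℝ) := Real.sq_sqrt (Nat.cast_nonneg n)
    have hnpos : 0 < n := by omega
    have hs0 : (0 : ℝ) < s := Real.sqrt_pos.mpr (by exact_mod_cast hnpos)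
    have hn2 : (2 : ℝ) ≤ s ^ 2 := by rw [hs]; exact_mod_cast hn
    have hs1 : 1 ≤ s := by nlinarith
    obtain ⟨hyl, hyr⟩ := abs_le.mp hy
    have hyy : y ^ 2 ≤ R ^ 2 := sq_le_sq' hyl hyr
    have h1 : 0 ≤ (t - 1) * s := mul_nonneg (by linarith) hs0.le
    have h2 : (t - 1) * s ≤ s := by nlinarith
    have h3u : 2 * t * y ≤ 3 * R := by
      nlinarith [mul_le_mul_of_nonneg_left hyr (by linarith : (0:ℝ) ≤ 2 * t),
        mul_nonneg (by linarith : (0:ℝ) ≤ 3 - 2 * t) hR.le]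
    have h3l : -(3 * R) ≤ 2 * t * y := by
      nlinarith [mul_le_mul_of_nonneg_left hyl (by linarith : (0:ℝ) ≤ 2 * t),
        mul_nonneg (by linarith : (0:ℝ) ≤ 3 - 2 * t) hR.le]
    have h4 : 0 ≤ s * y ^ 2 := mul_nonneg hs0.le (sq_nonneg y)
    have h5 : s * y ^ 2 ≤ s * R ^ 2 := mul_le_mul_of_nonneg_left hyy hs0.le
    have h6 : R ≤ R * s := by nlinarith
    have h7 : R ^ 2 ≤ R ^ 2 * s := by nlinarith [sq_nonneg R]
    have hnum : |(t - 1) * s - 2 * t * y + 2 * y - 2 * s * y ^ 2| ≤ C * s := by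
      rw [abs_le, hC]
      constructor <;> nlinarith
    have hden : (0 : ℝ) < s ^ 2 - 1 := by nlinarith
    have key := stmt19_key2 s t ((i : ℝ) / n) hn2 hs0 ht
    rw [hs] at key
    rw [← hydef] at key
    rw [key]
    rw [← hs, abs_div, abs_of_pos hden]
    have hsN : 2 * C / ε < s := by
      have hnN' : ((2 * C / ε) ^ 2 : ℝ) < (n : ℝ) := by
        calc ((2 * C / ε) ^ 2 : ℝ) < (N : ℝ) := hN
        _ ≤ (n : ℝ) := by exact_mod_cast hnN
      rw [← hs] at hnN'
      nlinarith [div_nonneg (by positivity : (0:ℝ) ≤ 2 * C) (le_of_lt hε), hs0]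
    have h2C : 2 * C < ε * s := by
      rw [div_lt_iff₀ hε] at hsN
      linarith [hsN]
    calc |(t - 1) * s - 2 * t * y + 2 * y - 2 * s * y ^ 2| / (s ^ 2 - 1)
        ≤ C * s / (s ^ 2 - 1) := (div_le_div_iff_of_pos_right hden).mpr hnum
      _ < ε := by
          rw [div_lt_iff₀ hden]
          nlinarith [mul_lt_mul_of_pos_right h2C hs0, mul_le_mul_of_nonneg_left hn2 hε.le]
end
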